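/- arXiv:2503.15698 — 4 statements merged into one kernel-verified Lean document; each statement's English description precedes it below -/
import Mathlib

section
/- Every square submatrix of the symmetric Pascal matrix, whose (j,ℓ) entry is the binomial coefficient C(j+ℓ, j) for j,ℓ ≥ 0, has positive determinant; that is, the symmetric Pascal matrix is totally positive. -/
open Finset Matrix

private lemma pascal_tele (d p : ℕ) : ∀ q, p ≤ q →
    (q + (d + 1)).choose q
      = (p + (d + 1)).choose p + ∑ u ∈ Finset.Ioc p q, (u + d).choose u := by
  intro q hq
  induction q, hq using Nat.le_induction with
  | base => simp
  | succ q hq ihq =>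
    have pasc : (q + 1 + (d + 1)).choose (q + 1)
        = (q + (d + 1)).choose q + (q + 1 + d).choose (q + 1) := by
      have h1 : q + 1 + (d + 1) = (q + (d + 1)) + 1 := by omega
      have h2 : q + 1 + d = q + (d + 1) := by omega
      rw [h1, h2]
      exact Nat.choose_succ_succ' (q + (d + 1)) q
    rw [Finset.sum_Ioc_succ_top hq, pasc, ihq]
    ring

private lemma pascal_aux : ∀ (k : ℕ) (r c : Fin k → ℕ), StrictMono r → StrictMono c →
    0 < (Matrix.of fun a b : Fin k => ((r a + c b).choose (r a) : ℝ)).det := by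
  intro k
  induction k with
  | zero =>
    intro r c _ _
    rw [Matrix.det_isEmpty]
    exact zero_lt_one
  | succ n ih =>
    suffices H : ∀ (m : ℕ) (r c : Fin (n + 1) → ℕ), StrictMono r → StrictMono c → c 0 = m →
        0 < (Matrix.of fun a b : Fin (n + 1) => ((r a + c b).choose (r a) : ℝ)).det by
      intro r c hr hc
      exact H (c 0) r c hr hc rfl
    intro m
    induction m with
    | succ m ihm =>
      intro r c hr hc h0
      -- shift step: reduce `c 0` by one
      have hc1 : ∀ b, 1 ≤ c b := by
        intro b
        have := hc.monotone (Fin.zero_le b)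
        omega
      set r' : Fin (n + 1) → ℕ := fun a => r a + 1 with hr'def
      set c' : Fin (n + 1) → ℕ := fun b => c b - 1 with hc'def
      have key : ∀ a b : Fin (n + 1), ((r a + c b).choose (r a) : ℝ)
          = ((r a + 1 : ℕ) : ℝ) *
            (Matrix.of (fun a b : Fin (n + 1) => ((c b : ℕ) : ℝ)⁻¹ *
              (Matrix.of (fun a b : Fin (n + 1) =>
                ((r' a + c' b).choose (r' a) : ℝ)) a b)) a b) := by
        intro a b
        have hnat : (r a + c b).choose (r a + 1) * (r a + 1)
            = (r a + c b).choose (r a) * (c b) := by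
          have h := Nat.choose_succ_right_eq (r a + c b) (r a)
          rwa [Nat.add_sub_cancel_left] at h
        have hrc : r' a + c' b = r a + c b := by
          simp only [hr'def, hc'def]
          have := hc1 b
          omega
        have hcb : ((c b : ℕ) : ℝ) ≠ 0 := by
          have := hc1 b
          positivity
        have hnatR : (((r a + c b).choose (r a + 1) : ℕ) : ℝ) * ((r a : ℕ) + 1)
            = (((r a + c b).choose (r a) : ℕ) : ℝ) * (c b : ℕ) := by
          exact_mod_cast congrArg (fun t : ℕ => (t : ℝ)) hnat
        simp only [Matrix.of_apply, hrc]
        push_cast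
        field_simp
        linarith [hnatR]
      have hmat : (Matrix.of fun a b : Fin (n + 1) => ((r a + c b).choose (r a) : ℝ))
          = Matrix.of (fun a b : Fin (n + 1) => ((r a + 1 : ℕ) : ℝ) *
              (Matrix.of (fun a b : Fin (n + 1) => ((c b : ℕ) : ℝ)⁻¹ *
                (Matrix.of (fun a b : Fin (n + 1) =>
                  ((r' a + c' b).choose (r' a) : ℝ)) a b)) a b)) := by
        ext a b
        exact key a b
      rw [hmat, Matrix.det_mul_column, Matrix.det_mul_row]
      have hrm : StrictMono r' := by
        intro a b hab
        simp only [hr'def]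
        have := hr hab
        omega
      have hcm : StrictMono c' := by
        intro a b hab
        simp only [hc'def]
        have h1 := hc hab
        have h2 := hc1 a
        omega
      have hc0' : c' 0 = m := by
        simp only [hc'def]
        omega
      have p1 : 0 < ∏ a : Fin (n + 1), ((r a + 1 : ℕ) : ℝ) := by
        apply Finset.prod_pos
        intro a _
        positivity
      have p2 : 0 < ∏ b : Fin (n + 1), ((c b : ℕ) : ℝ)⁻¹ := by
        apply Finset.prod_pos
        intro b _
        have := hc1 b
        positivity
      have p3 := ihm r' c' hrm hcm hc0'
      exact mul_pos p1 (mul_pos p2 p3)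
    | zero =>
      intro r c hr hc h0
      -- core case : c 0 = 0
      set M : Matrix (Fin (n + 1)) (Fin (n + 1)) ℝ :=
        Matrix.of fun a b : Fin (n + 1) => ((r a + c b).choose (r a) : ℝ) with hMdef
      set B : Matrix (Fin (n + 1)) (Fin (n + 1)) ℝ :=
        fun i => Fin.cases (M 0) (fun i' => M i'.succ - M i'.castSucc) i with hBdef
      have hcol : ∀ a : Fin (n + 1), M a 0 = 1 := by
        intro a
        simp [hMdef, h0]
      have hdet : M.det = B.det := by
        apply Matrix.det_eq_of_forall_row_eq_smul_add_pred (fun _ => (1 : ℝ))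
        · intro j
          simp [hBdef]
        · intro i j
          simp only [hBdef, Fin.cases_succ, Pi.sub_apply, one_mul]
          ring
      have hB0 : B 0 0 = 1 := by
        simp only [hBdef, Fin.cases_zero]
        exact hcol 0
      have hBs0 : ∀ i : Fin n, B i.succ 0 = 0 := by
        intro i
        simp only [hBdef, Fin.cases_succ, Pi.sub_apply, hcol, sub_self]
      have hdet2 : B.det = (B.submatrix Fin.succ Fin.succ).det := by
        rw [Matrix.det_succ_column_zero]
        rw [Finset.sum_eq_single (0 : Fin (n + 1))]
        · rw [hB0, Fin.succAbove_zero]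
          simp
        · intro i _ hi
          obtain ⟨i', rfl⟩ := Fin.exists_succ_eq.mpr hi
          rw [hBs0]
          ring
        · intro h
          exact absurd (Finset.mem_univ _) h
      set c'' : Fin n → ℕ := fun b => c b.succ - 1 with hc''def
      set S : Fin n → Finset ℕ := fun a => Finset.Ioc (r a.castSucc) (r a.succ) with hSdef
      have hcpos : ∀ b : Fin n, 1 ≤ c b.succ := by
        intro b
        have := hc (Fin.succ_pos b)
        omega
      have hNsum : ∀ (a b : Fin n), (B.submatrix Fin.succ Fin.succ) a b
          = ∑ u ∈ S a, ((u + c'' b).choose u : ℝ) := by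
        intro a b
        have h1 : r a.castSucc ≤ r a.succ := (hr (Fin.castSucc_lt_succ (i := a))).le
        have h2 : c'' b + 1 = c b.succ := by
          have := hcpos b
          simp only [hc''def]
          omega
        have hℕ : (r a.succ + c b.succ).choose (r a.succ)
            = (r a.castSucc + c b.succ).choose (r a.castSucc)
              + ∑ u ∈ S a, (u + c'' b).choose u := by
          rw [← h2]
          exact pascal_tele (c'' b) (r a.castSucc) (r a.succ) h1
        have : (B.submatrix Fin.succ Fin.succ) a b
            = ((r a.succ + c b.succ).choose (r a.succ) : ℝ)
              - ((r a.castSucc + c b.succ).choose (r a.castSucc) : ℝ) := by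
          simp [hBdef, hMdef, Matrix.submatrix]
        rw [this, hℕ]
        push_cast
        ring
      have hfun : (B.submatrix Fin.succ Fin.succ)
          = fun i => ∑ u ∈ S i, (fun b : Fin n => ((u + c'' b).choose u : ℝ)) := by
        funext a b
        rw [Finset.sum_apply]
        exact hNsum a b
      have hexpand : (B.submatrix Fin.succ Fin.succ).det
          = ∑ p ∈ Fintype.piFinset S,
              (Matrix.of fun a b : Fin n => ((p a + c'' b).choose (p a) : ℝ)).det := by
        rw [hfun]
        exact MultilinearMap.map_sum_finset
          (f := (Matrix.detRowAlternating :
            (Fin n → ℝ) [⋀^Fin n]→ₗ[ℝ] ℝ).toMultilinearMap)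
          (g := fun a u => (fun b : Fin n => ((u + c'' b).choose u : ℝ))) (A := S)
      rw [hdet, hdet2, hexpand]
      apply Finset.sum_pos
      · intro p hp
        have hpmem : ∀ a, p a ∈ S a := Fintype.mem_piFinset.mp hp
        have hpm : StrictMono p := by
          intro a b hab
          have h1 := Finset.mem_Ioc.mp (hpmem a)
          have h2 := Finset.mem_Ioc.mp (hpmem b)
          have h3 : r a.succ ≤ r b.castSucc :=
            hr.monotone (Fin.succ_le_castSucc_iff.mpr hab)
          omega
        have hcm : StrictMono c'' := by
          intro a b hab
          simp only [hc''def]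
          have h1 := hc (Fin.succ_lt_succ_iff.mpr hab)
          have h2 := hcpos a
          omega
        exact ih p c'' hpm hcm
      · apply Fintype.piFinset_nonempty.mpr
        intro a
        exact Finset.nonempty_Ioc.mpr (hr (Fin.castSucc_lt_succ (i := a)))

/-- The symmetric Pascal matrix, with (j,ℓ) entry C(j+ℓ, j) for j,ℓ ≥ 0, is
totally positive: every square submatrix (rows and columns chosen in increasing
order) has strictly positive determinant. -/
theorem pascal_totally_positive (k : ℕ) (r c : Fin k → ℕ)
    (hr : StrictMono r) (hc : StrictMono c) :
    0 < (Matrix.of fun a b : Fin k => ((r a + c b).choose (r a) : ℝ)).det := by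
  exact pascal_aux k r c hr hc
end

section
/- If v_1 < v_2 < … < v_n are positive reals, then every square submatrix of the generalized Vandermonde matrix with entries v_j^{ℓ} (j ∈ {1,…,n}, ℓ ∈ {0,…,n−1}) has positive determinant. -/
open Real Finset

/-- A nontrivial linear combination of `k` power functions with strictly increasing real
exponents cannot vanish at `k` distinct positive points. -/
lemma powerfn_no_roots : ∀ (k : ℕ) (t c : Fin k → ℝ), StrictMono t →
    ∀ u : Fin k → ℝ, StrictMono u → (∀ i, 0 < u i) →
    (∀ i, ∑ j, c j * u i ^ (t j) = 0) → ∀ j, c j = 0 := by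
  intro k
  induction k with
  | zero => intro _ _ _ _ _ _ _ j; exact absurd j.pos (by simp)
  | succ k IH =>
    intro t c ht u hu hupos hroot
    -- reduce to exponents shifted by `t 0`
    set s : Fin (k + 1) → ℝ := fun j => t j - t 0 with hs
    have hroot' : ∀ i, ∑ j, c j * u i ^ (s j) = 0 := by
      intro i
      have h0 : (0:ℝ) < u i := hupos i
      have : ∑ j, c j * u i ^ (s j) = (u i ^ (-t 0)) * ∑ j, c j * u i ^ (t j) := by
        rw [Finset.mul_sum]
        refine Finset.sum_congr rfl fun j _ => ?_
        rw [hs]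
        rw [Real.rpow_sub h0]
        rw [Real.rpow_neg h0.le]
        ring
      rw [this, hroot i, mul_zero]
    -- the function g and its derivative
    set g : ℝ → ℝ := fun x => ∑ j, c j * x ^ (s j) with hg
    set g' : ℝ → ℝ := fun x => ∑ j : Fin k, c j.succ * (s j.succ) * x ^ (s j.succ - 1) with hg'
    have hderiv : ∀ x : ℝ, 0 < x → HasDerivAt g (g' x) x := by
      intro x hx
      have h1 : HasDerivAt g (∑ j : Fin (k+1), c j * (s j * x ^ (s j - 1))) x := by
        apply HasDerivAt.fun_sum
        intro j _
        exact (Real.hasDerivAt_rpow_const (Or.inl hx.ne')).const_mul (c j)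
      have h2 : (∑ j : Fin (k+1), c j * (s j * x ^ (s j - 1))) = g' x := by
        rw [Fin.sum_univ_succ]
        have : s 0 = 0 := by simp [hs]
        rw [this]
        simp only [zero_mul, mul_zero, zero_add, hg']
        exact Finset.sum_congr rfl fun j _ => by ring
      rwa [h2] at h1
    -- main claim: all coefficients with index ≥ 1 vanish
    have key : ∀ j : Fin k, c j.succ = 0 := by
      by_contra hcon
      push_neg at hcon
      -- Rolle between consecutive roots
      have hw : ∀ i : Fin k, ∃ w ∈ Set.Ioo (u i.castSucc) (u i.succ), g' w = 0 := by
        intro i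
        have hlt : u i.castSucc < u i.succ := hu (Fin.castSucc_lt_succ (i := i))
        have hpos0 : (0:ℝ) < u i.castSucc := hupos _
        refine exists_hasDerivAt_eq_zero (f := g) (f' := g') hlt ?_ ?_ ?_
        · intro x hx
          have hx0 : 0 < x := lt_of_lt_of_le hpos0 hx.1
          exact ((hderiv x hx0).continuousAt).continuousWithinAt
        · simp only [hg]; rw [hroot' i.castSucc, hroot' i.succ]
        · intro x hx
          exact hderiv x (lt_trans hpos0 hx.1)
      choose w hwmem hwzero using hw
      have hwmono : StrictMono w := by
        intro a b hab
        have h1 : w a < u a.succ := (hwmem a).2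
        have h2 : u b.castSucc < w b := (hwmem b).1
        have h3 : u a.succ ≤ u b.castSucc := by
          apply hu.monotone
          rw [Fin.succ_le_castSucc_iff]
          exact hab
        linarith
      have hwpos : ∀ i, 0 < w i := fun i => lt_trans (hupos _) (hwmem i).1
      have htmono : StrictMono (fun j : Fin k => s j.succ - 1) := by
        intro a b hab
        simp only [hs, sub_lt_sub_iff_right]
        exact ht (Fin.succ_lt_succ_iff.mpr hab)
      have := IH (fun j => s j.succ - 1) (fun j => c j.succ * s j.succ) htmono w hwmono hwpos
        (fun i => by simpa [hg'] using hwzero i)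
      obtain ⟨j0, hj0⟩ := hcon
      have hsj : s j0.succ ≠ 0 := by
        have : t 0 < t j0.succ := ht (Fin.succ_pos j0)
        simp only [hs]; linarith
      exact hj0 (by have := this j0; rcases mul_eq_zero.mp this with h | h; exact h; exact absurd h hsj)
    -- now only c 0 could be nonzero; use the root at u 0
    have hc0 : c 0 = 0 := by
      have h := hroot 0
      rw [Fin.sum_univ_succ] at h
      have : ∀ j : Fin k, c j.succ * u 0 ^ (t j.succ) = 0 := fun j => by rw [key j, zero_mul]
      rw [Finset.sum_eq_zero (fun j _ => this j), add_zero] at h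
      have hpow : (0:ℝ) < u 0 ^ (t 0) := Real.rpow_pos_of_pos (hupos 0) _
      exact (mul_eq_zero.mp h).resolve_right hpow.ne'
    intro j
    rcases Fin.eq_zero_or_eq_succ j with h | ⟨j', rfl⟩
    · rw [h]; exact hc0
    · exact key j'

/-- The generalized Vandermonde determinant with real exponents is nonzero. -/
lemma gen_vandermonde_det_ne_zero (k : ℕ) (u : Fin k → ℝ) (t : Fin k → ℝ)
    (hu : StrictMono u) (hupos : ∀ i, 0 < u i) (ht : StrictMono t) :
    (Matrix.of fun i j : Fin k => u i ^ (t j)).det ≠ 0 := by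
  intro hdet
  obtain ⟨c, hc, hmul⟩ := (Matrix.exists_mulVec_eq_zero_iff).mpr hdet
  have hroot : ∀ i, ∑ j, c j * u i ^ (t j) = 0 := by
    intro i
    have := congrFun hmul i
    simp only [Matrix.mulVec, dotProduct, Matrix.of_apply, Pi.zero_apply] at this
    rw [← this]
    exact Finset.sum_congr rfl fun j _ => mul_comm _ _
  exact hc (funext (powerfn_no_roots k t c ht u hu hupos hroot))

/-- For 0 < v_1 < ⋯ < v_n, every square submatrix of the Vandermonde matrix
with entries v_j^ℓ (ℓ = 0,…,n−1) has positive determinant. -/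
theorem vandermonde_totally_positive (n : ℕ) (v : Fin n → ℝ)
    (hpos : ∀ j, 0 < v j) (hv : StrictMono v)
    (k : ℕ) (r : Fin k → Fin n) (c : Fin k → Fin n)
    (hr : StrictMono r) (hc : StrictMono c) :
    0 < (Matrix.of fun a b : Fin k => v (r a) ^ (c b : ℕ)).det := by
  set u : Fin k → ℝ := fun a => v (r a) with hu
  have hupos : ∀ a, 0 < u a := fun a => hpos _
  have humono : StrictMono u := hv.comp hr
  -- exponent path
  set T : ℝ → Fin k → ℝ := fun σ j => (1 - σ) * (j : ℕ) + σ * ((c j : ℕ) : ℝ) with hT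
  have hTmono : ∀ σ ∈ Set.Icc (0:ℝ) 1, StrictMono (T σ) := by
    intro σ hσ a b hab
    have h1 : ((a:ℕ):ℝ) < ((b:ℕ):ℝ) := by exact_mod_cast hab
    have h2 : (((c a : ℕ)):ℝ) < (((c b : ℕ)):ℝ) := by exact_mod_cast hc hab
    have h3 : (0:ℝ) ≤ 1 - σ := by linarith [hσ.2]
    have h4 : (0:ℝ) ≤ σ := hσ.1
    rcases eq_or_lt_of_le h3 with h | h
    · have hσ1 : σ = 1 := by linarith
      simp only [hT, hσ1]; simpa using h2
    · simp only [hT]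
      have := mul_lt_mul_of_pos_left h1 h
      have := mul_le_mul_of_nonneg_left h2.le h4
      nlinarith
  -- determinant along the path
  set F : ℝ → ℝ := fun σ => (Matrix.of fun i j : Fin k => u i ^ (T σ j)).det with hF
  have hFcont : Continuous F := by
    apply Continuous.matrix_det
    apply continuous_matrix
    intro i j
    have hb : (0:ℝ) < u i := hupos i
    have : (fun σ => u i ^ (T σ j)) = fun σ => Real.exp (Real.log (u i) * T σ j) := by
      funext σ
      rw [Real.rpow_def_of_pos hb]
    show Continuous fun σ => u i ^ (T σ j)
    rw [this]
    exact Real.continuous_exp.comp ((continuous_const).mul (by continuity))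
  have hFne : ∀ σ ∈ Set.Icc (0:ℝ) 1, F σ ≠ 0 := fun σ hσ =>
    gen_vandermonde_det_ne_zero k u (T σ) humono hupos (hTmono σ hσ)
  -- F 0 is the classical Vandermonde determinant, which is positive
  have hF0 : 0 < F 0 := by
    have heq : F 0 = (Matrix.vandermonde u).det := by
      simp only [hF]
      congr 1
      ext i j
      simp only [Matrix.of_apply, Matrix.vandermonde_apply, hT]
      norm_num [← Real.rpow_natCast]
    rw [heq, Matrix.det_vandermonde]
    apply Finset.prod_pos
    intro i _
    apply Finset.prod_pos
    intro j hj
    rw [Finset.mem_Ioi] at hj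
    exact sub_pos.mpr (humono hj)
  -- F 1 is the target determinant
  have hF1 : F 1 = (Matrix.of fun a b : Fin k => v (r a) ^ (c b : ℕ)).det := by
    simp only [hF]
    congr 1
    ext i j
    simp only [Matrix.of_apply, hT, hu]
    norm_num [← Real.rpow_natCast]
  -- IVT argument
  by_contra hle
  push_neg at hle
  have h1lt : F 1 < 0 := lt_of_le_of_ne (hF1 ▸ hle) (hF1 ▸ hFne 1 (by norm_num))
  have : (0:ℝ) ∈ Set.Icc (F 1) (F 0) := ⟨h1lt.le, hF0.le⟩
  obtain ⟨σ, hσmem, hσ⟩ := intermediate_value_Icc' (by norm_num : (0:ℝ) ≤ 1)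
    (hFcont.continuousOn) this
  exact hFne σ hσmem hσ
end

section
/- If A is an n×n real matrix whose entries are square roots of n² distinct prime numbers, then det A ≠ 0. -/
noncomputable def sqF (t : Finset ℕ) : IntermediateField ℚ ℝ :=
  IntermediateField.adjoin ℚ ((fun q : ℕ => Real.sqrt q) '' ↑t)

lemma sqrt_mem_sqF {t : Finset ℕ} {q : ℕ} (hq : q ∈ t) : Real.sqrt q ∈ sqF t :=
  IntermediateField.subset_adjoin _ _ ⟨q, by simpa using hq, rfl⟩

lemma sqrt_prod_real {ι : Type*} (u : Finset ι) (f : ι → ℝ) (hf : ∀ i, 0 ≤ f i) :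
    Real.sqrt (∏ i ∈ u, f i) = ∏ i ∈ u, Real.sqrt (f i) := by
  classical
  induction u using Finset.induction_on with
  | empty => simp
  | insert _ _ h ih =>
      rw [Finset.prod_insert h, Finset.prod_insert h, ← ih,
        Real.sqrt_mul (hf _)]

lemma sqrt_prod_eq (T : Finset ℕ) :
    Real.sqrt ((∏ q ∈ T, q : ℕ) : ℝ) = ∏ q ∈ T, Real.sqrt q := by
  classical
  induction T using Finset.induction_on with
  | empty => simp
  | insert _ _ h ih =>
      rw [Finset.prod_insert h, Finset.prod_insert h, ← ih]
      push_cast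
      rw [Real.sqrt_mul (by positivity)]

lemma sqrt_prod_mem_sqF {t T : Finset ℕ} (hT : T ⊆ t) :
    Real.sqrt ((∏ q ∈ T, q : ℕ) : ℝ) ∈ sqF t := by
  rw [sqrt_prod_eq]
  exact prod_mem fun q hq => sqrt_mem_sqF (hT hq)

lemma irrational_sqrt_squarefree {n : ℕ} (hn : Squarefree n) (h1 : 1 < n) :
    Irrational (Real.sqrt n) := by
  rw [irrational_sqrt_natCast_iff]
  rintro ⟨k, hk⟩
  have : IsUnit k := hn k (hk ▸ dvd_rfl)
  have hk1 : k = 1 := Nat.isUnit_iff.mp this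
  rw [hk1, mul_one] at hk
  omega

lemma sqrt_not_mem_sqF :
    ∀ (t : Finset ℕ), (∀ q ∈ t, Nat.Prime q) → ∀ n : ℕ, Squarefree n → 1 < n →
      (∀ q ∈ t, ¬ q ∣ n) → Real.sqrt n ∉ sqF t := by
  classical
  intro t
  induction t using Finset.induction_on with
  | empty =>
      intro _ n hn h1 _ hmem
      rw [sqF] at hmem
      simp only [Finset.coe_empty, Set.image_empty, IntermediateField.adjoin_empty] at hmem
      rw [IntermediateField.mem_bot] at hmem
      obtain ⟨q, hq⟩ := hmem
      exact irrational_sqrt_squarefree hn h1 ⟨q, hq⟩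
  | @insert p₀ t hp₀t ih =>
      intro hprimes n hn h1 hcop hmem
      have hp₀ : Nat.Prime p₀ := hprimes p₀ (Finset.mem_insert_self _ _)
      have htp : ∀ q ∈ t, Nat.Prime q := fun q hq => hprimes q (Finset.mem_insert_of_mem hq)
      have hKp : Real.sqrt p₀ ∉ sqF t := by
        refine ih htp p₀ hp₀.squarefree hp₀.one_lt fun q hq hdvd => ?_
        have := (Nat.prime_dvd_prime_iff_eq (htp q hq) hp₀).mp hdvd
        exact hp₀t (this ▸ hq)
      set s := Real.sqrt p₀ with hs
      have hs2 : s * s = (p₀ : ℝ) := Real.mul_self_sqrt (by positivity)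
      -- the subalgebra K t + K t * s
      have hmain : ∃ a ∈ sqF t, ∃ b ∈ sqF t, Real.sqrt n = a + b * s := by
        set Sa : Subalgebra ℚ ℝ :=
          { carrier := {x | ∃ a ∈ sqF t, ∃ b ∈ sqF t, x = a + b * s}
            mul_mem' := by
              rintro x y ⟨a, ha, b, hb, rfl⟩ ⟨c, hc, d, hd, rfl⟩
              refine ⟨a * c + b * d * p₀, ?_, a * d + b * c, ?_, by linear_combination b * d * hs2⟩
              · exact add_mem (mul_mem ha hc) (mul_mem (mul_mem hb hd)
                  (IntermediateField.natCast_mem _ p₀))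
              · exact add_mem (mul_mem ha hd) (mul_mem hb hc)
            add_mem' := by
              rintro x y ⟨a, ha, b, hb, rfl⟩ ⟨c, hc, d, hd, rfl⟩
              exact ⟨a + c, add_mem ha hc, b + d, add_mem hb hd, by ring⟩
            algebraMap_mem' := fun q =>
              ⟨algebraMap ℚ ℝ q, IntermediateField.algebraMap_mem _ q, 0, zero_mem _, by ring⟩ }
        have hinv : ∀ x ∈ Sa, x⁻¹ ∈ Sa := by
          rintro x ⟨a, ha, b, hb, rfl⟩
          rcases eq_or_ne (a + b * s) 0 with h0 | h0
          · rw [h0]; simp only [inv_zero]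
            exact ⟨0, zero_mem _, 0, zero_mem _, by ring⟩
          have hD : a ^ 2 - p₀ * b ^ 2 ≠ 0 := by
            intro hD
            rcases eq_or_ne b 0 with hb0 | hb0
            · apply h0; rw [hb0] at hD ⊢
              have : a = 0 := by nlinarith
              rw [this]; ring
            · apply hKp
              have hsq : (a / b) ^ 2 = (p₀ : ℝ) := by
                field_simp
                nlinarith
              have : a / b = s ∨ a / b = -s := by
                have h2 : (a / b) ^ 2 = s ^ 2 := by rw [hsq, sq, hs2]
                rcases sq_eq_sq_iff_eq_or_eq_neg.mp h2 with h | h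
                · exact Or.inl h
                · exact Or.inr h
              rcases this with h | h
              · rw [← h]; exact div_mem ha hb
              · have : s = -(a / b) := by rw [h]; ring
                rw [this]; exact neg_mem (div_mem ha hb)
          refine ⟨a / (a ^ 2 - p₀ * b ^ 2), div_mem ha (sub_mem (pow_mem ha 2)
            (mul_mem (IntermediateField.natCast_mem _ p₀) (pow_mem hb 2))),
            -b / (a ^ 2 - p₀ * b ^ 2), div_mem (neg_mem hb) (sub_mem (pow_mem ha 2)
            (mul_mem (IntermediateField.natCast_mem _ p₀) (pow_mem hb 2))), ?_⟩
          have hone : (a / (a ^ 2 - p₀ * b ^ 2) + -b / (a ^ 2 - p₀ * b ^ 2) * s)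
              * (a + b * s) = 1 := by
            field_simp
            linear_combination (-(b ^ 2)) * hs2
          exact (eq_inv_of_mul_eq_one_left hone).symm
        have hle : sqF (insert p₀ t) ≤ Sa.toIntermediateField hinv := by
          rw [sqF, IntermediateField.adjoin_le_iff]
          rintro x ⟨q, hq, rfl⟩
          simp only [Finset.coe_insert, Set.mem_insert_iff] at hq
          rcases hq with rfl | hq
          · exact ⟨0, zero_mem _, 1, one_mem _, by ring⟩
          · exact ⟨Real.sqrt q, sqrt_mem_sqF (by simpa using hq), 0, zero_mem _, by ring⟩
        exact hle hmem
      obtain ⟨a, ha, b, hb, hab⟩ := hmain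
      have hn2 : (n : ℝ) = a ^ 2 + p₀ * b ^ 2 + 2 * a * b * s := by
        have := Real.mul_self_sqrt (show (0:ℝ) ≤ n by positivity)
        rw [hab] at this
        nlinarith [hs2]
      have h2mem : (2:ℝ) ∈ sqF t := by
        exact_mod_cast IntermediateField.natCast_mem (sqF t) 2
      have hab0 : a * b = 0 := by
        by_contra hab0
        apply hKp
        obtain ⟨ha0, hb0⟩ := mul_ne_zero_iff.mp hab0
        have : s = ((n : ℝ) - a ^ 2 - p₀ * b ^ 2) / (2 * a * b) := by
          rw [eq_div_iff (mul_ne_zero (mul_ne_zero two_ne_zero ha0) hb0)]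
          linear_combination -hn2
        rw [this]
        exact div_mem (sub_mem (sub_mem (IntermediateField.natCast_mem _ n) (pow_mem ha 2))
          (mul_mem (IntermediateField.natCast_mem _ p₀) (pow_mem hb 2)))
          (mul_mem (mul_mem h2mem ha) hb)
      rcases mul_eq_zero.mp hab0 with ha0 | hb0
      · -- √(n * p₀) = b * p₀ ∈ sqF t
        have hnp : Real.sqrt (↑(n * p₀)) = b * p₀ := by
          push_cast
          rw [Real.sqrt_mul (by positivity), hab, ha0, zero_add, mul_assoc, ← hs, hs2]
        have : Real.sqrt (↑(n * p₀)) ∈ sqF t := by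
          rw [hnp]; exact mul_mem hb (IntermediateField.natCast_mem _ p₀)
        refine ih htp (n * p₀) ?_ ?_ ?_ this
        · refine (Nat.squarefree_mul ?_).mpr ⟨hn, hp₀.squarefree⟩
          exact ((Nat.Prime.coprime_iff_not_dvd hp₀).mpr
            (hcop p₀ (Finset.mem_insert_self _ _))).symm
        · exact lt_of_lt_of_le h1 (Nat.le_mul_of_pos_right n hp₀.pos)
        · intro q hq hdvd
          rcases (Nat.Prime.dvd_mul (htp q hq)).mp hdvd with h | h
          · exact hcop q (Finset.mem_insert_of_mem hq) h
          · have := (Nat.prime_dvd_prime_iff_eq (htp q hq) hp₀).mp h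
            exact hp₀t (this ▸ hq)
      · apply ih htp n hn h1 (fun q hq => hcop q (Finset.mem_insert_of_mem hq))
        rw [hab, hb0, zero_mul, add_zero] at *
        exact ha

lemma ratCast_mem_sqF (t : Finset ℕ) (q : ℚ) : (q : ℝ) ∈ sqF t :=
  IntermediateField.algebraMap_mem _ q

lemma coeff_eq_zero :
    ∀ (t : Finset ℕ), (∀ q ∈ t, Nat.Prime q) → ∀ c : Finset ℕ → ℚ,
      (∑ T ∈ t.powerset, (c T : ℝ) * Real.sqrt ((∏ q ∈ T, q : ℕ) : ℝ)) = 0 →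
      ∀ T ⊆ t, c T = 0 := by
  classical
  intro t
  induction t using Finset.induction_on with
  | empty =>
      intro _ c hsum T hT
      rw [Finset.subset_empty.mp hT]
      simp only [Finset.powerset_empty, Finset.sum_singleton, Finset.prod_empty,
        Nat.cast_one, Real.sqrt_one, mul_one] at hsum
      exact_mod_cast hsum
  | @insert p₀ t hp₀t ih =>
      intro hprimes c hsum T hT
      have hp₀ : Nat.Prime p₀ := hprimes p₀ (Finset.mem_insert_self _ _)
      have htp : ∀ q ∈ t, Nat.Prime q := fun q hq => hprimes q (Finset.mem_insert_of_mem hq)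
      have hKp : Real.sqrt p₀ ∉ sqF t := by
        refine sqrt_not_mem_sqF t htp p₀ hp₀.squarefree hp₀.one_lt fun q hq hdvd => ?_
        have := (Nat.prime_dvd_prime_iff_eq (htp q hq) hp₀).mp hdvd
        exact hp₀t (this ▸ hq)
      set A := ∑ T ∈ t.powerset, (c T : ℝ) * Real.sqrt ((∏ q ∈ T, q : ℕ) : ℝ) with hA
      set B := ∑ T ∈ t.powerset, ((c (insert p₀ T) : ℝ) * Real.sqrt ((∏ q ∈ T, q : ℕ) : ℝ))
        with hB
      have hdisj : Disjoint t.powerset (t.powerset.image (insert p₀)) := by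
        rw [Finset.disjoint_left]
        rintro S hS hS'
        obtain ⟨S', _, rfl⟩ := Finset.mem_image.mp hS'
        exact hp₀t (Finset.mem_powerset.mp hS (Finset.mem_insert_self _ _))
      have hsplit : A + B * Real.sqrt p₀ = 0 := by
        rw [← hsum, Finset.powerset_insert, Finset.sum_union hdisj]
        congr 1
        rw [Finset.sum_image (fun S hS S' hS' h => by
          have h1 : p₀ ∉ S := fun hc => hp₀t (Finset.mem_powerset.mp hS hc)
          have h2 : p₀ ∉ S' := fun hc => hp₀t (Finset.mem_powerset.mp hS' hc)
          rw [← Finset.erase_insert h1, h, Finset.erase_insert h2]), hB, Finset.sum_mul]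
        refine Finset.sum_congr rfl fun S hS => ?_
        have h1 : p₀ ∉ S := fun hc => hp₀t (Finset.mem_powerset.mp hS hc)
        rw [Finset.prod_insert h1]
        push_cast
        rw [Real.sqrt_mul (by positivity)]
        ring
      have hAmem : A ∈ sqF t := sum_mem fun S hS =>
        mul_mem (ratCast_mem_sqF t _) (sqrt_prod_mem_sqF (Finset.mem_powerset.mp hS))
      have hBmem : B ∈ sqF t := sum_mem fun S hS =>
        mul_mem (ratCast_mem_sqF t _) (sqrt_prod_mem_sqF (Finset.mem_powerset.mp hS))
      have hB0 : B = 0 := by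
        by_contra hB0
        apply hKp
        have : Real.sqrt p₀ = -A / B := by
          rw [eq_div_iff hB0]; linarith [hsplit]
        rw [this]
        exact div_mem (neg_mem hAmem) hBmem
      have hA0 : A = 0 := by rw [hB0, zero_mul, add_zero] at hsplit; exact hsplit
      have hcA : ∀ S ⊆ t, c S = 0 := ih htp c hA0
      have hcB : ∀ S ⊆ t, c (insert p₀ S) = 0 := ih htp (fun S => c (insert p₀ S)) hB0
      by_cases hpT : p₀ ∈ T
      · rw [← Finset.insert_erase hpT]
        exact hcB _ (Finset.subset_insert_iff.mp hT)
      · exact hcA T (by rwa [Finset.subset_insert_iff, Finset.erase_eq_of_notMem hpT] at hT)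

/-- A matrix whose entries are square roots of n² distinct primes has nonzero
determinant. -/
theorem det_sqrt_distinct_primes_ne_zero (n : ℕ) (p : Fin n → Fin n → ℕ)
    (hp : ∀ i j, Nat.Prime (p i j))
    (hinj : Function.Injective (Function.uncurry p)) :
    (Matrix.of fun i j => Real.sqrt (p i j)).det ≠ 0 := by
  classical
  intro hdet
  set Tf : Equiv.Perm (Fin n) → Finset ℕ :=
    fun σ => Finset.univ.image fun i => p (σ i) i with hTf
  set s : Finset ℕ := Finset.univ.image (Function.uncurry p) with hs
  have hTs : ∀ σ, Tf σ ∈ s.powerset := by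
    intro σ
    rw [Finset.mem_powerset]
    intro q hq
    obtain ⟨i, _, rfl⟩ := Finset.mem_image.mp hq
    exact Finset.mem_image.mpr ⟨(σ i, i), Finset.mem_univ _, rfl⟩
  have hinj' : ∀ σ : Equiv.Perm (Fin n), ∀ i j : Fin n,
      p (σ i) i = p (σ j) j → i = j := by
    intro σ i j h
    have := hinj (show Function.uncurry p (σ i, i) = Function.uncurry p (σ j, j) from h)
    exact (Prod.mk.injEq _ _ _ _).mp this |>.2
  have hprod : ∀ σ : Equiv.Perm (Fin n), (∏ q ∈ Tf σ, q) = ∏ i, p (σ i) i := by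
    intro σ
    exact Finset.prod_image fun i _ j _ h => hinj' σ i j h
  have hTinj : Function.Injective Tf := by
    intro σ τ h
    ext i
    have hmem : p (σ i) i ∈ Tf τ := by
      rw [← h]; exact Finset.mem_image.mpr ⟨i, Finset.mem_univ _, rfl⟩
    obtain ⟨j, _, hj⟩ := Finset.mem_image.mp hmem
    have := hinj (show Function.uncurry p (τ j, j) = Function.uncurry p (σ i, i) from hj)
    have h2 := (Prod.mk.injEq _ _ _ _).mp this
    have : j = i := h2.2
    rw [← h2.1, this]
  set c : Finset ℕ → ℚ := fun T =>
    ∑ σ ∈ Finset.univ.filter (fun σ => Tf σ = T), ((Equiv.Perm.sign σ : ℤ) : ℚ) with hc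
  have hsprime : ∀ q ∈ s, Nat.Prime q := by
    intro q hq
    obtain ⟨⟨i, j⟩, _, rfl⟩ := Finset.mem_image.mp hq
    exact hp i j
  have hsum : (∑ T ∈ s.powerset, (c T : ℝ) * Real.sqrt ((∏ q ∈ T, q : ℕ) : ℝ)) = 0 := by
    have key : (∑ T ∈ s.powerset, (c T : ℝ) * Real.sqrt ((∏ q ∈ T, q : ℕ) : ℝ))
        = ∑ σ : Equiv.Perm (Fin n),
            ((Equiv.Perm.sign σ : ℤ) : ℝ) * Real.sqrt ((∏ q ∈ Tf σ, q : ℕ) : ℝ) := by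
      rw [← Finset.sum_fiberwise_of_maps_to (fun σ _ => hTs σ)
        (fun σ => ((Equiv.Perm.sign σ : ℤ) : ℝ) * Real.sqrt ((∏ q ∈ Tf σ, q : ℕ) : ℝ))]
      refine Finset.sum_congr rfl fun T _ => ?_
      rw [hc]
      push_cast
      rw [Finset.sum_mul]
      refine Finset.sum_congr rfl fun σ hσ => ?_
      rw [(Finset.mem_filter.mp hσ).2]
    rw [key, ← hdet, Matrix.det_apply]
    refine Finset.sum_congr rfl fun σ _ => ?_
    rw [hprod σ, Units.smul_def, zsmul_eq_mul]
    congr 1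
    push_cast
    rw [sqrt_prod_real _ _ (fun i => by positivity)]
    rfl
  have hzero := coeff_eq_zero s hsprime c hsum (Tf 1) (Finset.mem_powerset.mp (hTs 1))
  have hone : c (Tf 1) = 1 := by
    simp only [hc]
    have : Finset.univ.filter (fun σ => Tf σ = Tf 1) = {1} := by
      ext σ
      simp only [Finset.mem_filter, Finset.mem_univ, true_and, Finset.mem_singleton]
      exact ⟨fun h => hTinj h, fun h => by rw [h]⟩
    rw [this, Finset.sum_singleton]
    simp
  rw [hzero] at hone
  exact one_ne_zero hone.symm
end

section
/- Let A ∈ M_n(ℤ) be the symmetric matrix with entries A_{jℓ} = c^{jℓ} for a fixed integer c ≥ 2 and indices j,ℓ ∈ {1,…,n}. Then every k×(n−k) off-diagonal submatrix A[S, S^c] with |S| = k ≤ n/2 has full rank k. -/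
open Polynomial Finset

/-- helper: if `n ∈ s ↔ n+1 ∈ t` then `s` has as many elements as `t.erase 0`. -/
lemma card_shift {s t : Finset ℕ} (h : ∀ n, n ∈ s ↔ n + 1 ∈ t) :
    s.card = (t.erase 0).card := by
  apply Finset.card_bij (fun n _ => n + 1)
  · intro a ha
    exact Finset.mem_erase.mpr ⟨Nat.succ_ne_zero a, (h a).1 ha⟩
  · intro a _ b _ hab
    omega
  · intro b hb
    rw [Finset.mem_erase] at hb
    obtain ⟨hb0, hbt⟩ := hb
    refine ⟨b - 1, ?_, by omega⟩
    rw [h]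
    have : b - 1 + 1 = b := by omega
    rwa [this]

/-- Rolle step: the number of positive roots of `p` is at most the number of
positive roots of `p'` plus one. -/
lemma pos_roots_le_derivative (p : ℝ[X]) (hp : p ≠ 0) (hp' : derivative p ≠ 0) :
    (p.roots.toFinset.filter (fun x => 0 < x)).card ≤
      ((derivative p).roots.toFinset.filter (fun x => 0 < x)).card + 1 := by
  set P := p.roots.toFinset.filter (fun x => 0 < x)
  set P' := (derivative p).roots.toFinset.filter (fun x => 0 < x)
  have h : P.card ≤ (P' \ P).card + 1 := by
    refine Finset.card_le_diff_of_interleaved fun x hx y hy hxy _ => ?_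
    simp only [P, Finset.mem_filter, Multiset.mem_toFinset, mem_roots hp] at hx hy
    obtain ⟨z, hz1, hz2⟩ := exists_deriv_eq_zero hxy p.continuousOn (hx.1.trans hy.1.symm)
    refine ⟨z, ?_, hz1.1, hz1.2⟩
    simp only [P', Finset.mem_filter, Multiset.mem_toFinset, mem_roots hp']
    exact ⟨by rwa [IsRoot, ← p.deriv], hx.2.trans hz1.1⟩
  exact h.trans (by gcongr; exact Finset.sdiff_subset)

/-- Weak Descartes' rule: a nonzero real polynomial has fewer distinct positive
roots than nonzero coefficients. -/
lemma pos_roots_card_lt_support_card (p : ℝ[X]) (hp : p ≠ 0) :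
    (p.roots.toFinset.filter (fun x => 0 < x)).card < p.support.card := by
  suffices H : ∀ d (p : ℝ[X]), p ≠ 0 → p.natDegree ≤ d →
      (p.roots.toFinset.filter (fun x => 0 < x)).card < p.support.card from
    H p.natDegree p hp le_rfl
  clear hp p
  intro d
  induction d using Nat.strong_induction_on with
  | _ d ih =>
  intro p hp hd
  by_cases h0 : p.coeff 0 = 0
  · -- p = X * divX p
    have hpX : p = X * divX p := by
      conv_lhs => rw [← X_mul_divX_add p, h0, map_zero, add_zero]
    have hq : divX p ≠ 0 := by
      intro h
      rw [h, mul_zero] at hpX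
      exact hp hpX
    have hdeg : (divX p).natDegree < p.natDegree := by
      have h1 : p.natDegree ≠ 0 := by
        intro h
        exact hp (by rw [eq_C_of_natDegree_eq_zero h, h0, map_zero])
      rw [natDegree_divX_eq_natDegree_tsub_one]
      omega
    have hsupp : p.support.card = (divX p).support.card := by
      have := card_shift (s := (divX p).support) (t := p.support)
        (fun n => by simp [mem_support_iff, coeff_divX])
      rw [this]
      congr 1
      rw [Finset.erase_eq_of_notMem]
      simp [mem_support_iff, h0]
    have hsub : p.roots.toFinset.filter (fun x => 0 < x) ⊆
        (divX p).roots.toFinset.filter (fun x => 0 < x) := by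
      intro x hx
      simp only [Finset.mem_filter, Multiset.mem_toFinset, mem_roots hp, mem_roots hq] at hx ⊢
      refine ⟨?_, hx.2⟩
      have := hx.1
      rw [IsRoot, hpX] at this
      simp only [eval_mul, eval_X] at this
      rcases mul_eq_zero.mp this with h | h
      · exact absurd h (ne_of_gt hx.2)
      · exact h
    calc (p.roots.toFinset.filter (fun x => 0 < x)).card
        ≤ ((divX p).roots.toFinset.filter (fun x => 0 < x)).card := Finset.card_le_card hsub
      _ < (divX p).support.card := ih _ (lt_of_lt_of_le hdeg hd) _ hq le_rfl
      _ = p.support.card := hsupp.symm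
  · -- constant coefficient nonzero
    by_cases hd0 : derivative p = 0
    · have : p.roots = 0 := by
        obtain ⟨a, rfl⟩ : ∃ a, p = C a := ⟨p.coeff 0, eq_C_of_derivative_eq_zero hd0⟩
        exact roots_C a
      rw [this]
      simp only [Multiset.toFinset_zero, Finset.filter_empty, Finset.card_empty]
      exact Finset.card_pos.mpr ⟨0, mem_support_iff.mpr h0⟩
    · have hdeg : (derivative p).natDegree < p.natDegree := by
        apply natDegree_derivative_lt
        intro h
        exact hd0 (by rw [eq_C_of_natDegree_eq_zero h]; simp)
      have hsupp : (derivative p).support.card + 1 = p.support.card := by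
        have hcs := card_shift (s := (derivative p).support) (t := p.support)
          (fun n => mem_support_derivative)
        rw [hcs, Finset.card_erase_of_mem (mem_support_iff.mpr h0)]
        have : 1 ≤ p.support.card := Finset.card_pos.mpr ⟨0, mem_support_iff.mpr h0⟩
        omega
      calc (p.roots.toFinset.filter (fun x => 0 < x)).card
          ≤ ((derivative p).roots.toFinset.filter (fun x => 0 < x)).card + 1 :=
            pos_roots_le_derivative p hp hd0
        _ < (derivative p).support.card + 1 := by
            have := ih _ (lt_of_lt_of_le hdeg hd) _ hd0 le_rfl
            omega
        _ = p.support.card := hsupp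


/-- For the symmetric Vandermonde-structured matrix with entries c^{jℓ}
(c ≥ 2, indices 1,…,n), every off-diagonal submatrix A[S, Sᶜ] with
|S| = k ≤ n/2 has full rank k (over ℚ). -/
theorem symmetric_vandermonde_offdiag_full_rank (n : ℕ) (c : ℤ) (hc : 2 ≤ c)
    (S : Finset (Fin n)) (k : ℕ) (hS : S.card = k) (hk : 2 * k ≤ n) :
    ((Matrix.of fun j ℓ : Fin n =>
        ((c : ℚ) ^ (((j : ℕ) + 1) * ((ℓ : ℕ) + 1)))).submatrix
      (fun i : {x // x ∈ S} => (i : Fin n))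
      (fun j : {x // x ∈ Sᶜ} => (j : Fin n))).rank = k := by
  classical
  have hindep : LinearIndependent ℚ
      (fun i : {x // x ∈ S} => fun ℓ : {x // x ∈ Sᶜ} =>
        ((c : ℚ) ^ ((((i : Fin n) : ℕ) + 1) * (((ℓ : Fin n) : ℕ) + 1)))) := by
    rw [Fintype.linearIndependent_iff]
    intro g hg i₀
    -- the dependency, evaluated at each column
    have hcol : ∀ ℓ : {x // x ∈ Sᶜ},
        ∑ i : {x // x ∈ S},
          g i * (c : ℚ) ^ ((((i : Fin n) : ℕ) + 1) * (((ℓ : Fin n) : ℕ) + 1)) = 0 := by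
      intro ℓ
      have := congrFun hg ℓ
      simpa using this
    -- the real polynomial ∑ gᵢ X^(i+1)
    set p : ℝ[X] := ∑ i : {x // x ∈ S},
      Polynomial.C ((g i : ℚ) : ℝ) * Polynomial.X ^ (((i : Fin n) : ℕ) + 1) with hp
    -- coefficients of p
    have hcoeff : ∀ i : {x // x ∈ S}, p.coeff (((i : Fin n) : ℕ) + 1) = ((g i : ℚ) : ℝ) := by
      intro i
      rw [hp, Polynomial.finset_sum_coeff]
      rw [Finset.sum_eq_single i]
      · simp
      · intro b _ hb
        rw [Polynomial.coeff_C_mul, Polynomial.coeff_X_pow, if_neg, mul_zero]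
        intro h
        exact hb (Subtype.ext (Fin.val_injective (by omega)))
      · simp
    -- p = 0 finishes the proof
    have hzero : p = 0 := by
      by_contra hpne
      -- support is small
      have hsupp : p.support.card ≤ k := by
        have hsub : p.support ⊆
            Finset.image (fun i : {x // x ∈ S} => ((i : Fin n) : ℕ) + 1) Finset.univ := by
          intro m hm
          rw [Polynomial.mem_support_iff] at hm
          rw [hp] at hm
          rw [Polynomial.finset_sum_coeff] at hm
          obtain ⟨i, _, hi⟩ := Finset.exists_ne_zero_of_sum_ne_zero hm
          rw [Polynomial.coeff_C_mul, Polynomial.coeff_X_pow] at hi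
          simp only [Finset.mem_image, Finset.mem_univ, true_and]
          refine ⟨i, ?_⟩
          by_contra h
          rw [if_neg (Ne.symm h), mul_zero] at hi
          exact hi rfl
        calc p.support.card ≤ _ := Finset.card_le_card hsub
          _ ≤ Finset.univ.card := Finset.card_image_le
          _ = k := by rw [Finset.card_univ, Fintype.card_coe, hS]
      -- many positive roots
      have hc1 : (1 : ℝ) < (c : ℝ) := by exact_mod_cast lt_of_lt_of_le one_lt_two hc
      have hroots : Finset.image
          (fun ℓ : {x // x ∈ Sᶜ} => ((c : ℝ)) ^ (((ℓ : Fin n) : ℕ) + 1)) Finset.univ ⊆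
          p.roots.toFinset.filter (fun x => 0 < x) := by
        intro x hx
        simp only [Finset.mem_image, Finset.mem_univ, true_and] at hx
        obtain ⟨ℓ, rfl⟩ := hx
        rw [Finset.mem_filter, Multiset.mem_toFinset, Polynomial.mem_roots hpne]
        constructor
        · rw [Polynomial.IsRoot, hp]
          rw [Polynomial.eval_finset_sum]
          have : ∀ i : {x // x ∈ S},
              Polynomial.eval ((c:ℝ) ^ (((ℓ : Fin n) : ℕ) + 1))
                (Polynomial.C ((g i : ℚ) : ℝ) * Polynomial.X ^ (((i : Fin n) : ℕ) + 1)) =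
              ((g i * (c : ℚ) ^ ((((i : Fin n) : ℕ) + 1) * (((ℓ : Fin n) : ℕ) + 1)) : ℚ) : ℝ) := by
            intro i
            rw [Polynomial.eval_mul, Polynomial.eval_C, Polynomial.eval_pow, Polynomial.eval_X,
              ← pow_mul]
            push_cast
            ring_nf
          rw [Finset.sum_congr rfl (fun i _ => this i), ← Rat.cast_sum, hcol ℓ, Rat.cast_zero]
        · positivity
      have hcard : n - k ≤ (p.roots.toFinset.filter (fun x => 0 < x)).card := by
        have hinj : Function.Injective
            (fun ℓ : {x // x ∈ Sᶜ} => ((c : ℝ)) ^ (((ℓ : Fin n) : ℕ) + 1)) := by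
          intro a b hab
          have := (pow_right_strictMono₀ hc1).injective hab
          exact Subtype.ext (Fin.val_injective (by omega))
        calc n - k = Sᶜ.card := by
              rw [Finset.card_compl, hS, Fintype.card_fin]
          _ = (Finset.univ : Finset {x // x ∈ Sᶜ}).card := by
              rw [Finset.card_univ, Fintype.card_coe]
          _ = (Finset.image
              (fun ℓ : {x // x ∈ Sᶜ} => ((c : ℝ)) ^ (((ℓ : Fin n) : ℕ) + 1)) Finset.univ).card :=
              (Finset.card_image_of_injective _ hinj).symm
          _ ≤ _ := Finset.card_le_card hroots
      have := pos_roots_card_lt_support_card p hpne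
      omega
    have : ((g i₀ : ℚ) : ℝ) = 0 := by rw [← hcoeff i₀, hzero, Polynomial.coeff_zero]
    exact_mod_cast this
  have := hindep.rank_matrix
  rw [Fintype.card_coe, hS] at this
  convert this using 2
  rfl
end
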